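/- arXiv:2401.00818 — 2 statements merged into one kernel-verified Lean document; each statement's English description precedes it below -/
import Mathlib

section
/- Let (a_n), (c_n), (d_n) be sequences of natural numbers with a_0 = 1, c_0 = 0, d_0 = 0 and a_n > 0 for every n, and suppose that in the ring of formal power series ℝ[[X]] one has Σ_{n≥0} a_n X^n/n! = exp(Σ_{n≥1} c_n X^n/n!) and (Σ_{n≥0} a_n X^n/n!)·(1 − Σ_{n≥1} d_n X^n/n!) = 1. Assume the sequence (a_n/n!) is gargantuan. Then for every integer r ≥ 0, as n → ∞, c_n/a_n = 1 − Σ_{k=1}^{r} d_k·C(n,k)·a_{n−k}/a_n + O(C(n,r+1)·a_{n−r−1}/a_n), where C(n,k) is the binomial coefficient. -/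
/-!
Put `u n = a n / n!`, `v n = d n / n!`, `w n = c n / n!` and let `A`, `D`, `W` be their
generating functions. From `A = exp W` and `A (1 - D) = 1` we get `W' = A D'`, that is
`n w n = ∑ k v k u (n - k)`, next to `u n = ∑ v k u (n - k)`. Subtracting, and cutting both
convolutions at `r` from each end, `n (w n - u n + ∑_{k ≤ r} v k u (n - k))` becomes
`∑_{k ≤ r} k v k u (n - k) - ∑_{j ≤ r} j u j v (n - j)` plus a middle part that
gargantuanity bounds by `n u (n - r - 1)`. The two end sums agree up to `O(u (n - r - 1))`:
by induction on `t` through `A = 1 + D A`, `v n = ∑_{i ≤ t} g i u (n - i) + O(u (n - t - 1))`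
where `g` are the coefficients of `(1 - D)²`, and `A' (1 - D)² = D'` turns this expansion of
`∑_{j ≤ r} j u j v (n - j)` into `∑_{m ≤ r} m v m u (n - m)`.
-/

open Filter Asymptotics Finset

/-- A real sequence `u` is *gargantuan* if `u (n-1) / u n → 0` and, for every `r ≥ 1`,
`∑_{k=r}^{n-r} |u k * u (n-k)| = O(u (n-r))` as `n → ∞`. -/
def Gargantuan (u : ℕ → ℝ) : Prop :=
  Tendsto (fun n => u (n - 1) / u n) atTop (nhds 0) ∧
    ∀ r : ℕ, 1 ≤ r →
      (fun n => ∑ k ∈ Finset.Icc r (n - r), |u k * u (n - k)|) =O[atTop]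
        fun n => u (n - r)

/-- The exponential `exp C` of a formal power series `C` (intended for `C` with zero
constant term): the coefficient of `X^n` is `∑_{k=0}^{n} [X^n] (C^k) / k!`. -/
noncomputable def expPS (C : PowerSeries ℝ) : PowerSeries ℝ :=
  PowerSeries.mk fun n =>
    ∑ k ∈ Finset.range (n + 1), (PowerSeries.coeff n (C ^ k)) / (Nat.factorial k)

open PowerSeries
open scoped Nat

section Sums

variable {M : Type*} [AddCommMonoid M]

lemma sum_range_succ_eq_add_sum_Icc (f : ℕ → M) (n : ℕ) :
    ∑ k ∈ range (n + 1), f k = f 0 + ∑ k ∈ Icc 1 n, f k := by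
  rw [range_eq_Ico, sum_eq_sum_Ico_succ_bot n.succ_pos, ← Ico_add_one_right_eq_Icc]
  rfl

lemma sum_range_succ_split_ends (f : ℕ → M) {s n : ℕ} (h : 2 * s < n) :
    ∑ k ∈ range (n + 1), f k = f 0 + ∑ k ∈ Icc 1 s, f k +
      ∑ k ∈ Icc (s + 1) (n - (s + 1)), f k + ∑ j ∈ Icc 1 s, f (n - j) + f n := by
  have htop : ∑ k ∈ Ioc (n - (s + 1)) (n - 1), f k = ∑ j ∈ Icc 1 s, f (n - j) := by
    refine sum_nbij' (n - ·) (n - ·) ?_ ?_ ?_ ?_ ?_ <;> intro k hk <;>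
      simp only [mem_Icc, mem_Ioc] at hk ⊢
    all_goals first | omega | (congr 1; omega)
  have hlast : ∑ k ∈ Icc 1 n, f k = ∑ k ∈ Icc 1 (n - 1), f k + f n := by
    have := sum_Icc_succ_top (by omega : 1 ≤ n - 1 + 1) f
    rwa [Nat.sub_add_cancel (by omega)] at this
  have hIoc : ∀ b, Icc 1 b = Ioc 0 b := Icc_add_one_left_eq_Ioc 0
  rw [sum_range_succ_eq_add_sum_Icc, hlast, ← htop, hIoc, hIoc, Icc_add_one_left_eq_Ioc,
    ← sum_Ioc_consecutive f (Nat.zero_le s) (by omega : s ≤ n - 1),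
    ← sum_Ioc_consecutive f (by omega : s ≤ n - (s + 1)) (by omega : n - (s + 1) ≤ n - 1)]
  simp only [add_assoc]

lemma sum_range_sum_Icc_eq_sum_Icc_sum_range (F : ℕ → ℕ → M) (r : ℕ) :
    ∑ m ∈ range (r + 1), ∑ j ∈ Icc 1 m, F j (m - j) =
      ∑ j ∈ Icc 1 r, ∑ i ∈ range (r - j + 1), F j i := by
  rw [sum_comm' (t' := Icc 1 r) (s' := fun j => Ico j (r + 1))
    (fun m j => by simp only [mem_range, mem_Icc, mem_Ico]; omega)]
  refine sum_congr rfl fun j hj => ?_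
  rw [sum_Ico_eq_sum_range, show r + 1 - j = r - j + 1 by simp only [mem_Icc] at hj; omega]
  simp

end Sums

section CommRing

variable {R : Type*} [CommRing R]

lemma coeff_pow_eq_zero_of_lt {C : R⟦X⟧} (hC : constantCoeff C = 0) {k n : ℕ} (h : n < k) :
    coeff n (C ^ k) = 0 :=
  X_pow_dvd_iff.mp (pow_dvd_pow_of_dvd (X_dvd_iff.mpr hC) k) n h

lemma coeff_mul_eq_sum_range (F G : R⟦X⟧) (n : ℕ) :
    coeff n (F * G) = ∑ k ∈ range (n + 1), coeff k F * coeff (n - k) G := by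
  rw [coeff_mul, Nat.sum_antidiagonal_eq_sum_range_succ_mk]

lemma X_mul_derivative_mk (f : ℕ → R) :
    X * d⁄dX R (PowerSeries.mk f) = PowerSeries.mk fun n => n * f n := by
  ext (_ | n)
  · simp
  · rw [coeff_succ_X_mul, coeff_derivative, coeff_mk, coeff_mk, mul_comm]
    push_cast; rfl

variable {A D : R⟦X⟧}

lemma derivative_mul_one_sub_of_mul_one_sub_eq_one (h : A * (1 - D) = 1) :
    d⁄dX R A * (1 - D) = A * d⁄dX R D := by
  have := congrArg (d⁄dX R) h
  rw [Derivation.leibniz, Derivation.map_one_eq_zero, map_sub, Derivation.map_one_eq_zero,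
    smul_eq_mul, smul_eq_mul] at this
  linear_combination this

lemma derivative_mul_one_sub_sq_of_mul_one_sub_eq_one (h : A * (1 - D) = 1) :
    d⁄dX R A * (1 - D) ^ 2 = d⁄dX R D := by
  linear_combination (1 - D) * derivative_mul_one_sub_of_mul_one_sub_eq_one h + d⁄dX R D * h

end CommRing

lemma expPS_eq_subst {C : ℝ⟦X⟧} (hC : constantCoeff C = 0) : expPS C = (exp ℝ).subst C := by
  ext n
  rw [coeff_subst' (HasSubst.of_constantCoeff_zero' hC),
    finsum_eq_sum_of_support_subset (s := range (n + 1))]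
  · simp [expPS, coeff_exp, div_eq_inv_mul]
  · intro k hk
    contrapose! hk
    simp [coeff_pow_eq_zero_of_lt hC (by simpa using hk)]

lemma derivative_expPS {C : ℝ⟦X⟧} (hC : constantCoeff C = 0) :
    d⁄dX ℝ (expPS C) = expPS C * d⁄dX ℝ C := by
  rw [expPS_eq_subst hC, derivative_subst (HasSubst.of_constantCoeff_zero' hC), derivative_exp]

lemma derivative_eq_mul_derivative_of_eq_expPS {A D W : ℝ⟦X⟧} (hW : constantCoeff W = 0)
    (hexp : A = expPS W) (h : A * (1 - D) = 1) : d⁄dX ℝ W = A * d⁄dX ℝ D := by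
  have hA : d⁄dX ℝ A = A * d⁄dX ℝ W := by rw [hexp, derivative_expPS hW]
  linear_combination
    (-d⁄dX ℝ W) * h + derivative_mul_one_sub_of_mul_one_sub_eq_one h - (1 - D) * hA

def HasExpansion (u x e : ℕ → ℝ) (r : ℕ) : Prop :=
  (fun n => x n - ∑ i ∈ range (r + 1), e i * u (n - i)) =O[atTop] fun n => u (n - (r + 1))

lemma hasExpansion_sum_Icc_mul_shift {u x e : ℕ → ℝ} {r : ℕ}
    (hx : ∀ j ∈ Icc 1 r, HasExpansion u x e (r - j)) (p : ℕ → ℝ) :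
    HasExpansion u (fun n => ∑ j ∈ Icc 1 r, p j * x (n - j))
      (fun m => ∑ j ∈ Icc 1 m, p j * e (m - j)) r := by
  have hshift : ∀ j ∈ Icc 1 r, (fun n => p j * (x (n - j) -
      ∑ i ∈ range (r - j + 1), e i * u (n - j - i))) =O[atTop] fun n => u (n - (r + 1)) := by
    intro j hj
    refine (((hx j hj).comp_tendsto (tendsto_sub_atTop_nat j)).const_mul_left (p j)).congr_right
      fun n => ?_
    simp only [Function.comp_apply, mem_Icc] at hj ⊢
    congr 1
    omega
  refine (IsBigO.sum hshift).congr_left fun n => ?_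
  have hmain : ∑ m ∈ range (r + 1), (∑ j ∈ Icc 1 m, p j * e (m - j)) * u (n - m) =
      ∑ j ∈ Icc 1 r, ∑ i ∈ range (r - j + 1), p j * (e i * u (n - j - i)) := by
    rw [← sum_range_sum_Icc_eq_sum_Icc_sum_range]
    refine sum_congr rfl fun m _ => ?_
    rw [sum_mul]
    refine sum_congr rfl fun j hj => ?_
    rw [show n - j - (m - j) = n - m by simp only [mem_Icc] at hj; omega]
    ring
  simp only [Finset.sum_apply, hmain, mul_sub, mul_sum, sum_sub_distrib]

lemma Gargantuan.isBigO_sum_Icc {u : ℕ → ℝ} (hu : Gargantuan u) {s : ℕ} (hs : 1 ≤ s)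
    {F : ℕ → ℕ → ℝ} (hF : ∀ n, ∀ k ∈ Icc s (n - s), |F n k| ≤ |u k * u (n - k)|) :
    (fun n => ∑ k ∈ Icc s (n - s), F n k) =O[atTop] fun n => u (n - s) := by
  refine IsBigO.trans (isBigO_of_le _ fun n => ?_) (hu.2 s hs)
  rw [Real.norm_eq_abs, Real.norm_eq_abs]
  exact (abs_sum_le_sum_abs _ _).trans ((sum_le_sum (hF n)).trans (le_abs_self _))

lemma abs_inv_mul_sub_mul_mul_le {k n : ℕ} (hkn : k ≤ n) {x y z : ℝ} (hy : 0 ≤ y)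
    (hyx : y ≤ x) : |(n : ℝ)⁻¹ * (((k : ℝ) - n) * y * z)| ≤ |x * z| := by
  have hfrac : |(n : ℝ)⁻¹ * ((k : ℝ) - n)| ≤ 1 := by
    rcases Nat.eq_zero_or_pos n with rfl | hn
    · simp
    · have hn' : (0 : ℝ) < n := by exact_mod_cast hn
      have hk : (k : ℝ) ≤ n := by exact_mod_cast hkn
      rw [abs_mul, abs_inv, abs_of_pos hn', abs_of_nonpos (by linarith), inv_mul_le_one₀ hn']
      linarith
  calc |(n : ℝ)⁻¹ * (((k : ℝ) - n) * y * z)|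
        = |(n : ℝ)⁻¹ * ((k : ℝ) - n)| * |y| * |z| := by
          rw [← abs_mul, ← abs_mul]; ring_nf
    _ ≤ 1 * |x| * |z| := by gcongr
    _ = |x * z| := by rw [one_mul, abs_mul]

section OneSubInverse

variable {u v w : ℕ → ℝ}

lemma eq_ite_add_sum_of_mul_one_sub_eq_one (hA : PowerSeries.mk u * (1 - PowerSeries.mk v) = 1)
    (n : ℕ) : u n = (if n = 0 then 1 else 0) + ∑ k ∈ range (n + 1), v k * u (n - k) := by
  have h : PowerSeries.mk u = 1 + PowerSeries.mk v * PowerSeries.mk u := by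
    linear_combination hA
  simpa [coeff_one, coeff_mul_eq_sum_range] using congrArg (coeff n) h

lemma eq_one_of_mul_one_sub_eq_one (hA : PowerSeries.mk u * (1 - PowerSeries.mk v) = 1)
    (hv0 : v 0 = 0) : u 0 = 1 := by
  simpa [hv0] using eq_ite_add_sum_of_mul_one_sub_eq_one hA 0

lemma le_of_mul_one_sub_eq_one (hA : PowerSeries.mk u * (1 - PowerSeries.mk v) = 1)
    (hv0 : v 0 = 0) (hupos : ∀ n, 0 < u n) (hvnn : ∀ n, 0 ≤ v n) (n : ℕ) : v n ≤ u n := by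
  rcases Nat.eq_zero_or_pos n with rfl | hn
  · exact hv0 ▸ (hupos 0).le
  · calc v n = v n * u (n - n) := by
          rw [Nat.sub_self, eq_one_of_mul_one_sub_eq_one hA hv0, mul_one]
      _ ≤ ∑ k ∈ range (n + 1), v k * u (n - k) :=
        single_le_sum (f := fun k => v k * u (n - k))
          (fun k _ => mul_nonneg (hvnn k) (hupos _).le) (self_mem_range_succ n)
      _ = u n := by rw [eq_ite_add_sum_of_mul_one_sub_eq_one hA n, if_neg hn.ne', zero_add]

lemma coeff_one_sub_sq_add_sum_of_mul_one_sub_eq_one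
    (hA : PowerSeries.mk u * (1 - PowerSeries.mk v) = 1) (hv0 : v 0 = 0) (m : ℕ) :
    coeff m ((1 - PowerSeries.mk v) ^ 2) +
        ∑ j ∈ Icc 1 m, u j * coeff (m - j) ((1 - PowerSeries.mk v) ^ 2) =
      (if m = 0 then 1 else 0) - v m := by
  have h : PowerSeries.mk u * (1 - PowerSeries.mk v) ^ 2 = 1 - PowerSeries.mk v := by
    linear_combination (1 - PowerSeries.mk v) * hA
  have := congrArg (coeff m) h
  rw [coeff_mul_eq_sum_range, sum_range_succ_eq_add_sum_Icc] at this
  simpa [coeff_one, eq_one_of_mul_one_sub_eq_one hA hv0] using this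

lemma sum_Icc_mul_coeff_one_sub_sq_of_mul_one_sub_eq_one
    (hA : PowerSeries.mk u * (1 - PowerSeries.mk v) = 1) (m : ℕ) :
    ∑ j ∈ Icc 1 m, (j * u j) * coeff (m - j) ((1 - PowerSeries.mk v) ^ 2) = m * v m := by
  have h : (X * d⁄dX ℝ (PowerSeries.mk u)) * (1 - PowerSeries.mk v) ^ 2 =
      X * d⁄dX ℝ (PowerSeries.mk v) := by
    rw [mul_assoc, derivative_mul_one_sub_sq_of_mul_one_sub_eq_one hA]
  have := congrArg (coeff m) h
  rw [X_mul_derivative_mk, X_mul_derivative_mk, coeff_mul_eq_sum_range,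
    sum_range_succ_eq_add_sum_Icc] at this
  simpa using this

theorem hasExpansion_of_mul_one_sub_eq_one (hu : Gargantuan u) (hupos : ∀ n, 0 < u n)
    (hvnn : ∀ n, 0 ≤ v n) (hA : PowerSeries.mk u * (1 - PowerSeries.mk v) = 1) (hv0 : v 0 = 0)
    (t : ℕ) : HasExpansion u v (fun m => coeff m ((1 - PowerSeries.mk v) ^ 2)) t := by
  induction t using Nat.strong_induction_on with
  | _ s ih =>
  set g := fun m => coeff m ((1 - PowerSeries.mk v) ^ 2)
  have htail := hasExpansion_sum_Icc_mul_shift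
    (fun j hj => ih (s - j) (by simp only [mem_Icc] at hj; omega)) u
  have hmid := hu.isBigO_sum_Icc (s := s + 1) (F := fun n k => v k * u (n - k)) (by omega)
    fun n k _ => by
      rw [abs_mul, abs_mul]
      exact mul_le_mul_of_nonneg_right
        (abs_le_abs_of_nonneg (hvnn k) (le_of_mul_one_sub_eq_one hA hv0 hupos hvnn k))
        (abs_nonneg _)
  refine (htail.add hmid).neg_left.congr' ?_ EventuallyEq.rfl
  filter_upwards [eventually_gt_atTop (2 * s)] with n hn
  have hg : ∑ m ∈ range (s + 1), g m * u (n - m) +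
      ∑ m ∈ range (s + 1), (∑ j ∈ Icc 1 m, u j * g (m - j)) * u (n - m) =
        u n - ∑ k ∈ Icc 1 s, v k * u (n - k) := by
    rw [← sum_add_distrib]
    simp [← add_mul, g, coeff_one_sub_sq_add_sum_of_mul_one_sub_eq_one hA hv0, sub_mul,
      sum_range_succ_eq_add_sum_Icc _ s, hv0]
    ring
  have htop : ∑ j ∈ Icc 1 s, v (n - j) * u (n - (n - j)) = ∑ j ∈ Icc 1 s, u j * v (n - j) :=
    sum_congr rfl fun j hj => by
      rw [Nat.sub_sub_self (by simp only [mem_Icc] at hj; omega), mul_comm]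
  have hrec := eq_ite_add_sum_of_mul_one_sub_eq_one hA n
  rw [if_neg (by omega), sum_range_succ_split_ends _ hn, htop, hv0, Nat.sub_self,
    eq_one_of_mul_one_sub_eq_one hA hv0] at hrec
  linarith

lemma mul_sub_add_sum_eq_of_derivative_eq
    (hA : PowerSeries.mk u * (1 - PowerSeries.mk v) = 1) (hv0 : v 0 = 0)
    (hW : d⁄dX ℝ (PowerSeries.mk w) = PowerSeries.mk u * d⁄dX ℝ (PowerSeries.mk v))
    {r n : ℕ} (hn : 2 * r < n) :
    (n : ℝ) * (w n - u n + ∑ k ∈ Icc 1 r, v k * u (n - k)) =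
      -(∑ j ∈ Icc 1 r, (j * u j) * v (n - j) - ∑ m ∈ range (r + 1), m * v m * u (n - m)) +
        ∑ k ∈ Icc (r + 1) (n - (r + 1)), ((k : ℝ) - n) * v k * u (n - k) := by
  have hw : (n : ℝ) * w n = ∑ k ∈ range (n + 1), k * v k * u (n - k) := by
    have h : X * d⁄dX ℝ (PowerSeries.mk w) =
        (X * d⁄dX ℝ (PowerSeries.mk v)) * PowerSeries.mk u := by
      rw [hW]; ring
    rw [X_mul_derivative_mk, X_mul_derivative_mk] at h
    simpa [coeff_mul_eq_sum_range] using congrArg (coeff n) h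
  have hwu :
      (n : ℝ) * (w n - u n) = ∑ k ∈ range (n + 1), ((k : ℝ) - n) * v k * u (n - k) := by
    rw [mul_sub, hw, eq_ite_add_sum_of_mul_one_sub_eq_one hA n, if_neg (by omega), zero_add,
      mul_sum, ← sum_sub_distrib]
    exact sum_congr rfl fun k _ => by ring
  have htop : ∑ j ∈ Icc 1 r, (((n - j : ℕ) : ℝ) - n) * v (n - j) * u (n - (n - j)) =
      -∑ j ∈ Icc 1 r, (j * u j) * v (n - j) := by
    rw [← sum_neg_distrib]
    refine sum_congr rfl fun j hj => ?_
    simp only [mem_Icc] at hj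
    rw [Nat.cast_sub (by omega), Nat.sub_sub_self (by omega)]
    ring
  have hhead : ∑ m ∈ range (r + 1), m * v m * u (n - m) =
      ∑ k ∈ Icc 1 r, ((k : ℝ) - n) * v k * u (n - k) +
        n * ∑ k ∈ Icc 1 r, v k * u (n - k) := by
    rw [sum_range_succ_eq_add_sum_Icc, mul_sum, ← sum_add_distrib]
    simp only [CharP.cast_eq_zero, zero_mul, zero_add]
    exact sum_congr rfl fun k _ => by ring
  rw [sum_range_succ_split_ends _ hn, htop, hv0, Nat.sub_self] at hwu
  linear_combination hwu - hhead

theorem isBigO_sub_add_sum_of_derivative_eq (hu : Gargantuan u)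
    (hupos : ∀ n, 0 < u n) (hvnn : ∀ n, 0 ≤ v n)
    (hA : PowerSeries.mk u * (1 - PowerSeries.mk v) = 1) (hv0 : v 0 = 0)
    (hW : d⁄dX ℝ (PowerSeries.mk w) = PowerSeries.mk u * d⁄dX ℝ (PowerSeries.mk v))
    (r : ℕ) :
    (fun n => w n - u n + ∑ k ∈ Icc 1 r, v k * u (n - k)) =O[atTop]
      fun n => u (n - (r + 1)) := by
  have hX : HasExpansion u (fun n => ∑ j ∈ Icc 1 r, (j * u j) * v (n - j))
      (fun m => m * v m) r := by
    simpa only [sum_Icc_mul_coeff_one_sub_sq_of_mul_one_sub_eq_one hA] using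
      hasExpansion_sum_Icc_mul_shift (p := fun j => (j : ℝ) * u j)
        (fun j _ => hasExpansion_of_mul_one_sub_eq_one hu hupos hvnn hA hv0 (r - j))
  have hends : (fun n : ℕ => (n : ℝ)⁻¹ * -(∑ j ∈ Icc 1 r, (j * u j) * v (n - j) -
      ∑ m ∈ range (r + 1), m * v m * u (n - m))) =O[atTop] fun n => u (n - (r + 1)) := by
    simpa only [one_mul] using
      ((tendsto_inv_atTop_nhds_zero_nat (𝕜 := ℝ)).isBigO_one ℝ).mul hX.neg_left
  have hmid := hu.isBigO_sum_Icc (s := r + 1)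
    (F := fun n k => (n : ℝ)⁻¹ * (((k : ℝ) - n) * v k * u (n - k))) (by omega)
    fun n k hk => abs_inv_mul_sub_mul_mul_le (by simp only [mem_Icc] at hk; omega) (hvnn k)
      (le_of_mul_one_sub_eq_one hA hv0 hupos hvnn k)
  refine (hends.add hmid).congr' ?_ EventuallyEq.rfl
  filter_upwards [eventually_gt_atTop (2 * r)] with n hn
  rw [← mul_sum, ← mul_add, ← mul_sub_add_sum_eq_of_derivative_eq hA hv0 hW hn,
    inv_mul_cancel_left₀ (by exact_mod_cast (by omega : n ≠ 0))]

end OneSubInverse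

lemma mul_choose_mul_div_eq {k n : ℕ} (h : k ≤ n) (x y z : ℝ) :
    x * n.choose k * y / z = x / k ! * (y / (n - k)!) / (z / n !) := by
  rw [Nat.cast_choose ℝ h]
  field_simp

lemma div_sub_one_sub_sum_choose_eq {a c d : ℕ → ℕ} {r n : ℕ} (hn : r ≤ n)
    (ha : a n ≠ 0) :
    (c n : ℝ) / a n - (1 - ∑ k ∈ Icc 1 r, (d k : ℝ) * n.choose k * a (n - k) / a n) =
      ((c n : ℝ) / (n ! : ℝ) - a n / (n ! : ℝ) +
        ∑ k ∈ Icc 1 r, (d k : ℝ) / k ! * (a (n - k) / (n - k)!)) / (a n / (n ! : ℝ)) := by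
  rw [sum_congr rfl fun k hk => mul_choose_mul_div_eq (by simp only [mem_Icc] at hk; omega) _ _ _,
    ← sum_div]
  generalize ∑ k ∈ Icc 1 r, (d k : ℝ) / k ! * (a (n - k) / (n - k)!) = S
  field_simp
  ring

theorem set_asymptotics_general
    (a c d : ℕ → ℕ)
    (hc0 : c 0 = 0) (hd0 : d 0 = 0)
    (hapos : ∀ n, 0 < a n)
    (hexp : (PowerSeries.mk fun n => (a n : ℝ) / (Nat.factorial n)) =
      expPS (PowerSeries.mk fun n => (c n : ℝ) / (Nat.factorial n)))
    (hseq : (PowerSeries.mk fun n => (a n : ℝ) / (Nat.factorial n)) *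
        (1 - PowerSeries.mk fun n => (d n : ℝ) / (Nat.factorial n)) = 1)
    (hgarg : Gargantuan fun n => (a n : ℝ) / (Nat.factorial n)) :
    ∀ r : ℕ,
      (fun n => (c n : ℝ) / (a n) -
          (1 - ∑ k ∈ Finset.Icc 1 r,
            (d k : ℝ) * (n.choose k) * (a (n - k)) / (a n)))
        =O[atTop] fun n => (n.choose (r + 1) : ℝ) * (a (n - (r + 1))) / (a n) := by
  intro r
  set u : ℕ → ℝ := fun n => (a n : ℝ) / (n ! : ℝ)
  set v : ℕ → ℝ := fun n => (d n : ℝ) / (n ! : ℝ)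
  set w : ℕ → ℝ := fun n => (c n : ℝ) / (n ! : ℝ)
  have hupos : ∀ n, 0 < u n := fun n => by have := hapos n; positivity
  have hE := isBigO_sub_add_sum_of_derivative_eq hgarg hupos (fun n => by positivity) hseq
    (by simp [v, hd0]) (derivative_eq_mul_derivative_of_eq_expPS (by simp [w, hc0]) hexp hseq) r
  refine ((hE.mul (isBigO_refl (fun n => (u n)⁻¹) atTop)).const_mul_right
    (c := ((r + 1)! : ℝ)⁻¹) (by positivity)).congr' ?_ ?_
  · filter_upwards [eventually_ge_atTop r] with n hn
    rw [div_sub_one_sub_sum_choose_eq hn (hapos n).ne', div_eq_mul_inv]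
  · filter_upwards [eventually_ge_atTop (r + 1)] with n hn
    rw [← one_mul (n.choose (r + 1) : ℝ), mul_choose_mul_div_eq hn, one_div, div_eq_mul_inv,
      mul_assoc]

/-- SET asymptotics. -/
theorem set_asymptotics
    (a c d : ℕ → ℕ)
    (ha0 : a 0 = 1) (hc0 : c 0 = 0) (hd0 : d 0 = 0)
    (hapos : ∀ n, 0 < a n)
    (hexp : (PowerSeries.mk fun n => (a n : ℝ) / (Nat.factorial n)) =
      expPS (PowerSeries.mk fun n => (c n : ℝ) / (Nat.factorial n)))
    (hseq : (PowerSeries.mk fun n => (a n : ℝ) / (Nat.factorial n)) *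
        (1 - PowerSeries.mk fun n => (d n : ℝ) / (Nat.factorial n)) = 1)
    (hgarg : Gargantuan fun n => (a n : ℝ) / (Nat.factorial n)) :
    ∀ r : ℕ,
      (fun n => (c n : ℝ) / (a n) -
          (1 - ∑ k ∈ Finset.Icc 1 r,
            (d k : ℝ) * (n.choose k) * (a (n - k)) / (a n)))
        =O[atTop] fun n => (n.choose (r + 1) : ℝ) * (a (n - (r + 1))) / (a n) :=
  set_asymptotics_general a c d hc0 hd0 hapos hexp hseq hgarg
end

section
/- Define ccm_{2n} by the identity in ℝ[[X]]: Σ_{n≥0} (2n−1)!!·X^{2n} = exp(Σ_{n≥1} ccm_{2n} X^{2n}/(2n)!), and define im_{2k} by Σ_{k≥1} im_{2k} X^k = 1 − (Σ_{n≥0} (2n−1)!!·X^n)^{−1}. Then for every integer r ≥ 0, as n → ∞, ccm_{2n}/((2n)!·(2n−1)!!) = 1 − Σ_{k=1}^{r} im_{2k}·(2(n−k)−1)!!/(2n−1)!! + O((2(n−r−1)−1)!!/(2n−1)!!). -/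
/-!
Let `𝔉 = ∑ (2n-1)!! Xⁿ`, `𝔘 = 𝔉⁻¹` (so `[Xᵏ] 𝔘 = -im_{2k}` for `k ≥ 1`) and
`G = ∑ ccm_{2n} Xⁿ / (2n)!`. From `𝔉(X²) = exp (G(X²))` we get `𝔉' = 𝔉 G'`, and
`(2n+1)!! = (2n+1) (2n-1)!!` gives `𝔉 = 1 + X 𝔉 + 2 X² 𝔉'`. Hence `[X^{n+1}] 𝔘 = -2n [Xⁿ] G`,
`n [Xⁿ] G = ∑ₖ [Xᵏ] 𝔘 · (n-k) (2(n-k)-1)!!` and `𝔘' = -𝔘² 𝔉'`.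

The claim is `[Xⁿ] G = ∑_{k ≤ r} [Xᵏ] 𝔘 (2(n-k)-1)!! + O((2(n-r-1)-1)!!)`, proved by strong
induction on `r`. Through `[X^{n+1}] 𝔘 = -2n [Xⁿ] G`, the expansion of `G` to order `s` yields
`[Xᵐ] 𝔘 = -∑_{i ≤ s} [Xⁱ] 𝔘² (2(m-i)-1)!! + O((2(m-s-1)-1)!!)`. In `n` times the remainder of
order `r`, the terms of the convolution with `k ≤ r` or `k ≥ n - r` recombine, via
`𝔘' = -𝔘² 𝔉'`, into such remainders of order `< r`; the middle terms are at most
`n ∑_{r<k<n-r} (2k-1)!! (2(n-k)-1)!! = O(n (2(n-r-1)-1)!!)`, because `|[Xᵏ] 𝔘| ≤ (2k-1)!!`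
(all coefficients of `𝔘` but the constant one are nonpositive).
-/

open Filter Asymptotics Finset

namespace ConnectedMaps

open PowerSeries Nat

section General

variable {R : Type*} [CommRing R]

lemma coeff_mul_eq_sum_range (f g : R⟦X⟧) (n : ℕ) :
    coeff n (f * g) = ∑ k ∈ range (n + 1), coeff k f * coeff (n - k) g := by
  rw [coeff_mul, Nat.sum_antidiagonal_eq_sum_range_succ (fun i j => coeff i f * coeff j g)]

lemma coeff_X_mul_derivative (f : R⟦X⟧) (n : ℕ) :
    coeff n (X * d⁄dX R f) = n * coeff n f := by
  rcases n with _ | n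
  · simp
  · rw [coeff_succ_X_mul, coeff_derivative]; push_cast; ring

lemma derivative_expand (p : ℕ) (hp : p ≠ 0) (f : R⟦X⟧) :
    d⁄dX R (expand p hp f) = expand p hp (d⁄dX R f) * ((p : R⟦X⟧) * X ^ (p - 1)) := by
  rw [expand_apply, expand_apply, derivative_subst (HasSubst.X_pow hp), derivative_pow,
    derivative_X, mul_one]

lemma expand_injective (p : ℕ) (hp : p ≠ 0) :
    Function.Injective (expand p hp : R⟦X⟧ → R⟦X⟧) :=
  fun f g h => ext fun n => by simpa using congrArg (coeff (p * n)) h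

lemma sum_range_succ_eq_head_add_middle_add_tail {M : Type*} [AddCommMonoid M] (f : ℕ → M)
    {r n : ℕ} (hn : 2 * r + 1 ≤ n) :
    ∑ k ∈ range (n + 1), f k = ∑ k ∈ range (r + 1), f k + ∑ k ∈ Icc (r + 1) (n - (r + 1)), f k
      + ∑ j ∈ range (r + 1), f (n - j) := by
  have hmiddle : Icc (r + 1) (n - (r + 1)) = Ico (r + 1) (n - r) := by
    ext k; simp only [mem_Ico, mem_Icc]; omega
  have htail : ∑ j ∈ range (r + 1), f (n - j) = ∑ k ∈ Ico (n - r) (n + 1), f k := by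
    rw [range_eq_Ico, sum_Ico_reflect _ _ (by omega), show n + 1 - (r + 1) = n - r by omega,
      Nat.sub_zero]
  rw [hmiddle, htail, range_eq_Ico, range_eq_Ico, sum_Ico_consecutive _ (Nat.zero_le _) (by omega),
    sum_Ico_consecutive _ (Nat.zero_le _) (by omega)]

lemma isBigO_of_isBigO_comp_succ {E F : Type*} [Norm E] [Norm F] {f : ℕ → E} {g : ℕ → F}
    (h : (fun n => f (n + 1)) =O[atTop] fun n => g (n + 1)) : f =O[atTop] g := by
  refine (h.comp_tendsto (tendsto_sub_atTop_nat 1)).congr' ?_ ?_ <;>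
    filter_upwards [eventually_ge_atTop 1] with n hn <;> simp [Nat.sub_add_cancel hn]

lemma isBigO_of_natCast_mul_isBigO {f g : ℕ → ℝ}
    (h : (fun n : ℕ => (n : ℝ) * f n) =O[atTop] fun n => (n : ℝ) * g n) : f =O[atTop] g := by
  refine ((isBigO_refl (fun n : ℕ => (n : ℝ)⁻¹) atTop).mul h).congr' ?_ ?_ <;>
    filter_upwards [eventually_ne_atTop 0] with n hn <;> field_simp

end General

lemma expPS_eq_subst_exp {C : ℝ⟦X⟧} (hC : constantCoeff C = 0) : expPS C = (exp ℝ).subst C := by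
  ext n
  rw [expPS, coeff_mk, coeff_subst' (HasSubst.of_constantCoeff_zero' hC),
    finsum_eq_sum_of_support_subset _ (s := range (n + 1)) fun k hk => ?_]
  · refine sum_congr rfl fun k _ => ?_
    rw [coeff_exp]
    simp [div_eq_inv_mul]
  · rw [coe_range, Set.mem_Iio]
    by_contra hnk
    refine hk ?_
    beta_reduce
    rw [coeff_of_lt_order n (lt_of_lt_of_le (by exact_mod_cast (by omega : n < k))
      (le_order_pow_of_constantCoeff_eq_zero k hC)), smul_zero]

lemma derivative_expPS {C : ℝ⟦X⟧} (hC : constantCoeff C = 0) :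
    d⁄dX ℝ (expPS C) = expPS C * d⁄dX ℝ C := by
  rw [expPS_eq_subst_exp hC, derivative_subst (HasSubst.of_constantCoeff_zero' hC),
    derivative_exp]

theorem derivative_eq_mul_of_expand_eq_expPS {p : ℕ} (hp : p ≠ 0) {F G : ℝ⟦X⟧}
    (hG : constantCoeff G = 0) (h : expand p hp F = expPS (expand p hp G)) :
    d⁄dX ℝ F = F * d⁄dX ℝ G := by
  have hd := congrArg (d⁄dX ℝ) h
  rw [derivative_expPS (by rwa [constantCoeff_expand]), derivative_expand, derivative_expand,
    ← h] at hd
  refine expand_injective p hp (mul_right_cancel₀ (b := (p : ℝ⟦X⟧) * X ^ (p - 1)) ?_ ?_)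
  · refine mul_ne_zero ?_ (pow_ne_zero _ X_ne_zero)
    rw [← map_natCast C p, ← map_zero C, C_injective.ne_iff]
    exact_mod_cast hp
  · rw [map_mul]
    linear_combination hd

noncomputable def dfac (n : ℕ) : ℝ := ((2 * n - 1)‼ : ℕ)

@[simp] lemma dfac_zero : dfac 0 = 1 := by simp [dfac]

lemma dfac_succ (n : ℕ) : dfac (n + 1) = (2 * n + 1) * dfac n := by
  rcases n with _ | n
  · simp [dfac]
  · rw [dfac, dfac, show 2 * (n + 1 + 1) - 1 = (2 * (n + 1) - 1) + 2 by omega,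
      Nat.doubleFactorial_add_two, show 2 * (n + 1) - 1 + 2 = 2 * (n + 1) + 1 by omega]
    push_cast
    ring

lemma dfac_pos (n : ℕ) : 0 < dfac n := by
  simpa [dfac] using Nat.doubleFactorial_pos _

lemma dfac_sub_of_lt {n s : ℕ} (h : s < n) :
    dfac (n - s) = (2 * ((n - (s + 1) : ℕ) : ℝ) + 1) * dfac (n - (s + 1)) := by
  rw [show n - s = n - (s + 1) + 1 by omega, dfac_succ]

lemma dfac_add (s m : ℕ) :
    dfac (s + m) = dfac s * ∏ j ∈ range m, (2 * ((s + j : ℕ) : ℝ) + 1) := by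
  induction m with
  | zero => simp
  | succ m ih => rw [← add_assoc, dfac_succ, ih, prod_range_succ]; ring

lemma dfac_mul_dfac_sub_le {n k s : ℕ} (hsk : s ≤ k) (hks : k + s ≤ n) :
    dfac k * dfac (n - k) ≤ dfac s * dfac (n - s) := by
  obtain ⟨m, rfl⟩ := Nat.exists_eq_add_of_le hsk
  rw [show n - s = (n - (s + m)) + m by omega, dfac_add, dfac_add, mul_right_comm,
    mul_assoc (dfac s)]
  gcongr
  · exact (dfac_pos _).le
  · exact (dfac_pos _).le
  · omega

lemma natCast_mul_dfac_sub_succ_isBigO (s : ℕ) :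
    (fun n : ℕ => (n : ℝ) * dfac (n - (s + 1))) =O[atTop] fun n => dfac (n - s) := by
  refine IsBigO.of_bound' ?_
  filter_upwards [eventually_ge_atTop (2 * s + 1)] with n hn
  have hcast : (n : ℝ) ≤ 2 * ((n - (s + 1) : ℕ) : ℝ) + 1 := by
    exact_mod_cast (by omega : n ≤ 2 * (n - (s + 1)) + 1)
  rw [Real.norm_of_nonneg (by positivity [dfac_pos (n - (s + 1))]),
    Real.norm_of_nonneg (dfac_pos _).le, dfac_sub_of_lt (s := s) (by omega)]
  exact mul_le_mul_of_nonneg_right hcast (dfac_pos _).le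

lemma sum_dfac_mul_dfac_sub_isBigO (s : ℕ) :
    (fun n => ∑ k ∈ Icc s (n - s), dfac k * dfac (n - k)) =O[atTop] fun n => dfac (n - s) := by
  have hbound : ∀ᶠ n in atTop, ‖∑ k ∈ Icc s (n - s), dfac k * dfac (n - k)‖ ≤
      ‖2 * dfac s * dfac (n - s) + dfac (s + 1) * (n * dfac (n - (s + 1)))‖ := by
    filter_upwards [eventually_ge_atTop (2 * s + 2)] with n hn
    have hsplit : Icc s (n - s) = insert s (insert (n - s) (Icc (s + 1) (n - (s + 1)))) := by
      ext k; simp only [mem_Icc, mem_insert]; omega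
    have hmiddle : ∑ k ∈ Icc (s + 1) (n - (s + 1)), dfac k * dfac (n - k) ≤
        n * (dfac (s + 1) * dfac (n - (s + 1))) := by
      refine (sum_le_card_nsmul _ _ (dfac (s + 1) * dfac (n - (s + 1))) fun k hk => ?_).trans ?_
      · rw [mem_Icc] at hk
        exact dfac_mul_dfac_sub_le hk.1 (by omega)
      · rw [nsmul_eq_mul, Nat.card_Icc]
        gcongr
        · exact mul_nonneg (dfac_pos _).le (dfac_pos _).le
        · exact_mod_cast (by omega : n - (s + 1) + 1 - (s + 1) ≤ n)
    have hsum_nonneg : 0 ≤ ∑ k ∈ Icc s (n - s), dfac k * dfac (n - k) :=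
      sum_nonneg fun k _ => (mul_pos (dfac_pos k) (dfac_pos (n - k))).le
    have hbound_nonneg : 0 ≤ 2 * dfac s * dfac (n - s) + dfac (s + 1) * (n * dfac (n - (s + 1))) :=
      by positivity [dfac_pos s, dfac_pos (n - s), dfac_pos (s + 1), dfac_pos (n - (s + 1))]
    rw [Real.norm_of_nonneg hsum_nonneg, Real.norm_of_nonneg hbound_nonneg, hsplit,
      sum_insert (by simp only [mem_insert, mem_Icc]; omega),
      sum_insert (by simp only [mem_Icc]; omega), show n - (n - s) = s by omega]
    linarith
  refine (IsBigO.of_bound' hbound).trans (IsBigO.add ?_ ?_)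
  · exact (isBigO_refl _ _).const_mul_left _
  · exact (natCast_mul_dfac_sub_succ_isBigO s).const_mul_left _

lemma coeff_two_mul (f : ℝ⟦X⟧) (n : ℕ) : coeff n (2 * f) = 2 * coeff n f := by
  rw [← map_ofNat C 2, coeff_C_mul]

noncomputable def dfacSeries : ℝ⟦X⟧ := mk dfac

local notation "𝔉" => dfacSeries
local notation "𝔘" => dfacSeries⁻¹

lemma dfacSeries_mul_inv : 𝔉 * 𝔘 = 1 :=
  PowerSeries.mul_inv_cancel _ (by simp [dfacSeries])

lemma dfacSeries_eq : 𝔉 = 1 + X * (𝔉 + 2 * (X * d⁄dX ℝ 𝔉)) := by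
  ext n
  rcases n with _ | n
  · simp [dfacSeries]
  · rw [map_add, coeff_succ_X_mul, map_add, coeff_two_mul, coeff_X_mul_derivative]
    simp [dfacSeries, dfac_succ]
    ring

lemma derivative_inv_dfacSeries : d⁄dX ℝ 𝔘 = -𝔘 ^ 2 * d⁄dX ℝ 𝔉 := derivative_inv' _

lemma inv_dfacSeries_eq : 𝔘 = 1 - X + 2 * X * ((X * d⁄dX ℝ 𝔘) * 𝔉) := by
  linear_combination (-2 * X ^ 2 * 𝔉) * derivative_inv_dfacSeries - 𝔉 * 𝔘 ^ 2 * dfacSeries_eq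
    + (1 + 𝔉 * 𝔘 - 𝔘 - X - X * 𝔉 * 𝔘) * dfacSeries_mul_inv

lemma inv_dfacSeries_sq : 𝔘 ^ 2 = 𝔘 - X * (𝔘 - 2 * (X * d⁄dX ℝ 𝔘)) := by
  linear_combination (-2 * X ^ 2) * derivative_inv_dfacSeries - 𝔘 ^ 2 * dfacSeries_eq
    + (𝔘 - X * 𝔘) * dfacSeries_mul_inv

lemma coeff_zero_inv_dfacSeries : coeff 0 𝔘 = 1 := by simp [dfacSeries]

lemma coeff_one_inv_dfacSeries : coeff 1 𝔘 = -1 := by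
  conv_lhs => rw [inv_dfacSeries_eq]
  simp [mul_assoc, coeff_two_mul]

lemma sum_coeff_inv_dfacSeries_mul_dfac {n : ℕ} (hn : n ≠ 0) :
    ∑ k ∈ range (n + 1), coeff k 𝔘 * dfac (n - k) = 0 := by
  have h := congrArg (coeff n) dfacSeries_mul_inv
  rw [mul_comm, coeff_mul_eq_sum_range, coeff_one, if_neg hn] at h
  simpa [dfacSeries] using h

lemma coeff_succ_inv_dfacSeries_eq_sum {n : ℕ} (hn : n ≠ 0) :
    coeff (n + 1) 𝔘 = 2 * ∑ k ∈ range (n + 1), k * coeff k 𝔘 * dfac (n - k) := by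
  conv_lhs => rw [inv_dfacSeries_eq]
  rw [mul_assoc, map_add, map_sub, coeff_two_mul, coeff_succ_X_mul, coeff_mul_eq_sum_range]
  simp only [coeff_X_mul_derivative, dfacSeries, coeff_mk]
  simp [hn, coeff_X]

lemma natCast_mul_coeff_inv_dfacSeries (n : ℕ) :
    n * coeff n 𝔘 = -∑ j ∈ range (n + 1), j * dfac j * coeff (n - j) (𝔘 ^ 2) := by
  rw [← coeff_X_mul_derivative, derivative_inv_dfacSeries,
    show X * (-𝔘 ^ 2 * d⁄dX ℝ 𝔉) = -((X * d⁄dX ℝ 𝔉) * 𝔘 ^ 2) by ring, map_neg,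
    coeff_mul_eq_sum_range]
  simp [coeff_X_mul_derivative, dfacSeries]

lemma sum_natCast_mul_coeff_inv_dfacSeries_mul_dfac (r n : ℕ) :
    ∑ k ∈ range (r + 1), k * coeff k 𝔘 * dfac (n - k) =
      -∑ j ∈ range (r + 1), j * dfac j *
        ∑ i ∈ range (r - j + 1), coeff i (𝔘 ^ 2) * dfac (n - j - i) := by
  let f : ℕ → ℕ → ℝ := fun j i => j * dfac j * (coeff i (𝔘 ^ 2) * dfac (n - j - i))
  calc ∑ k ∈ range (r + 1), k * coeff k 𝔘 * dfac (n - k)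
      = -∑ k ∈ range (r + 1), ∑ j ∈ range (k + 1), f j (k - j) := by
        simp_rw [natCast_mul_coeff_inv_dfacSeries, neg_mul, sum_neg_distrib, sum_mul]
        refine congrArg _ (sum_congr rfl fun k _ => sum_congr rfl fun j hj => ?_)
        simp only [f]
        rw [show n - j - (k - j) = n - k by have := mem_range.mp hj; omega]
        ring
    _ = -∑ j ∈ range (r + 1), ∑ i ∈ range (r - j + 1), f j i := by
        rw [sum_range_diag_flip]
        refine congrArg _ (sum_congr rfl fun j hj => ?_)
        rw [show r + 1 - j = r - j + 1 by have := mem_range.mp hj; omega]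
    _ = _ := by simp_rw [f, mul_sum]

lemma coeff_zero_inv_dfacSeries_sq : coeff 0 (𝔘 ^ 2) = 1 := by simp [dfacSeries]

lemma coeff_succ_inv_dfacSeries_sq (i : ℕ) :
    coeff (i + 1) (𝔘 ^ 2) = coeff (i + 1) 𝔘 + (2 * i - 1) * coeff i 𝔘 := by
  rw [inv_dfacSeries_sq, map_sub, coeff_succ_X_mul, map_sub, coeff_two_mul,
    coeff_X_mul_derivative]
  ring

lemma coeff_inv_dfacSeries_nonpos {n : ℕ} (hn : n ≠ 0) : coeff n 𝔘 ≤ 0 := by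
  induction n using Nat.strong_induction_on with
  | _ n ih =>
    obtain ⟨m, rfl⟩ := Nat.exists_eq_succ_of_ne_zero hn
    rcases eq_or_ne m 0 with rfl | hm
    · rw [coeff_one_inv_dfacSeries]; norm_num
    rw [coeff_succ_inv_dfacSeries_eq_sum hm]
    refine mul_nonpos_of_nonneg_of_nonpos zero_le_two (sum_nonpos fun k hk => ?_)
    rcases eq_or_ne k 0 with rfl | hk0
    · simp
    have hkm : k < m + 1 := mem_range.mp hk
    exact mul_nonpos_of_nonpos_of_nonneg
      (mul_nonpos_of_nonneg_of_nonpos k.cast_nonneg (ih k (by omega) hk0)) (dfac_pos _).le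

lemma abs_coeff_inv_dfacSeries_le (n : ℕ) : |coeff n 𝔘| ≤ dfac n := by
  rcases n with _ | m
  · simp [coeff_zero_inv_dfacSeries]
  have h := sum_coeff_inv_dfacSeries_mul_dfac m.succ_ne_zero
  rw [sum_range_succ, sum_range_succ', Nat.sub_self, Nat.sub_zero, coeff_zero_inv_dfacSeries,
    dfac_zero] at h
  have hmiddle : ∑ k ∈ range m, coeff (k + 1) 𝔘 * dfac (m + 1 - (k + 1)) ≤ 0 :=
    sum_nonpos fun k _ => mul_nonpos_of_nonpos_of_nonneg
      (coeff_inv_dfacSeries_nonpos k.succ_ne_zero) (dfac_pos _).le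
  rw [abs_of_nonpos (coeff_inv_dfacSeries_nonpos m.succ_ne_zero)]
  linarith

lemma sum_Icc_coeff_inv_dfacSeries_mul_isBigO (s : ℕ) :
    (fun n => ∑ k ∈ Icc s (n - s), coeff k 𝔘 * ((n - k : ℕ) * dfac (n - k)))
      =O[atTop] fun n => (n : ℝ) * dfac (n - s) := by
  refine IsBigO.trans ?_ ((isBigO_refl (fun n : ℕ => (n : ℝ)) _).mul
    (sum_dfac_mul_dfac_sub_isBigO s))
  refine isBigO_of_le _ fun n => ?_
  rw [Real.norm_of_nonneg (mul_nonneg n.cast_nonneg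
    (sum_nonneg fun k _ => (mul_pos (dfac_pos _) (dfac_pos _)).le)), mul_sum]
  refine (norm_sum_le _ _).trans (sum_le_sum fun k _ => ?_)
  have hnk : ((n - k : ℕ) : ℝ) ≤ n := Nat.cast_le.mpr (Nat.sub_le n k)
  rw [norm_mul, Real.norm_eq_abs,
    Real.norm_of_nonneg (mul_nonneg (Nat.cast_nonneg _) (dfac_pos _).le)]
  calc |coeff k 𝔘| * ((n - k : ℕ) * dfac (n - k)) ≤ dfac k * (n * dfac (n - k)) :=
        mul_le_mul (abs_coeff_inv_dfacSeries_le k)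
          (mul_le_mul_of_nonneg_right hnk (dfac_pos _).le)
          (mul_nonneg (Nat.cast_nonneg _) (dfac_pos _).le) (dfac_pos _).le
    _ = n * (dfac k * dfac (n - k)) := by ring

lemma sum_range_coeff_inv_dfacSeries_mul_dfac {b : ℕ → ℝ} (hb : mk b = 1 - 𝔘) (r n : ℕ) :
    ∑ k ∈ range (r + 1), coeff k 𝔘 * dfac (n - k) =
      dfac n - ∑ k ∈ Icc 1 r, b k * dfac (n - k) := by
  rw [range_eq_Ico, sum_eq_sum_Ico_succ_bot (by omega : 0 < r + 1), zero_add,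
    Ico_add_one_right_eq_Icc, coeff_zero_inv_dfacSeries, one_mul, Nat.sub_zero, sub_eq_add_neg,
    ← sum_neg_distrib]
  refine congrArg _ (sum_congr rfl fun k hk => ?_)
  have hk0 : k ≠ 0 := by have := (mem_Icc.mp hk).1; omega
  have hcoeff := congrArg (coeff k) hb
  simp only [coeff_mk, map_sub, coeff_one, if_neg hk0, zero_sub] at hcoeff
  rw [hcoeff]
  ring

lemma sum_coeff_inv_dfacSeries_sq_mul_dfac {s n : ℕ} (h : s ≤ n) :
    ∑ i ∈ range (s + 1), coeff i (𝔘 ^ 2) * dfac (n + 1 - i) =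
      2 * n * ∑ k ∈ range (s + 1), coeff k 𝔘 * dfac (n - k)
        - (2 * s - 1) * coeff s 𝔘 * dfac (n - s) := by
  induction s with
  | zero => simp [coeff_zero_inv_dfacSeries_sq, coeff_zero_inv_dfacSeries, dfac_succ]; ring
  | succ s ih =>
    rw [sum_range_succ, ih (by omega), sum_range_succ _ (s + 1), coeff_succ_inv_dfacSeries_sq,
      show n + 1 - (s + 1) = n - s by omega, dfac_sub_of_lt (by omega : s < n),
      Nat.cast_sub (by omega : s + 1 ≤ n)]
    push_cast
    ring

section Connected

variable {G : ℝ⟦X⟧}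

lemma X_mul_derivative_eq_inv_mul (hG : d⁄dX ℝ 𝔉 = 𝔉 * d⁄dX ℝ G) :
    X * d⁄dX ℝ G = 𝔘 * (X * d⁄dX ℝ 𝔉) := by
  linear_combination (-X * d⁄dX ℝ G) * dfacSeries_mul_inv - X * 𝔘 * hG

lemma inv_dfacSeries_eq_of_derivative (hG : d⁄dX ℝ 𝔉 = 𝔉 * d⁄dX ℝ G) :
    𝔘 = 1 - X - 2 * X * (X * d⁄dX ℝ G) := by
  linear_combination inv_dfacSeries_eq + 2 * X ^ 2 * 𝔉 * derivative_inv_dfacSeries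
    - 2 * X ^ 2 * 𝔉 * 𝔘 ^ 2 * hG - 2 * X ^ 2 * d⁄dX ℝ G * (1 + 𝔉 * 𝔘) * dfacSeries_mul_inv

lemma natCast_mul_coeff_eq_sum (hG : d⁄dX ℝ 𝔉 = 𝔉 * d⁄dX ℝ G) (n : ℕ) :
    n * coeff n G = ∑ k ∈ range (n + 1), coeff k 𝔘 * ((n - k : ℕ) * dfac (n - k)) := by
  rw [← coeff_X_mul_derivative, X_mul_derivative_eq_inv_mul hG, coeff_mul_eq_sum_range]
  simp only [coeff_X_mul_derivative, dfacSeries, coeff_mk]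

lemma coeff_succ_inv_dfacSeries_eq_neg_mul (hG : d⁄dX ℝ 𝔉 = 𝔉 * d⁄dX ℝ G) {n : ℕ}
    (hn : n ≠ 0) : coeff (n + 1) 𝔘 = -2 * n * coeff n G := by
  conv_lhs => rw [inv_dfacSeries_eq_of_derivative hG]
  rw [mul_assoc, map_sub, map_sub, coeff_two_mul, coeff_succ_X_mul, coeff_X_mul_derivative]
  simp [hn, coeff_X, mul_assoc]

noncomputable def remainder (G : ℝ⟦X⟧) (r n : ℕ) : ℝ :=
  coeff n G - ∑ k ∈ range (r + 1), coeff k 𝔘 * dfac (n - k)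

noncomputable def invRemainder (s m : ℕ) : ℝ :=
  coeff m 𝔘 + ∑ i ∈ range (s + 1), coeff i (𝔘 ^ 2) * dfac (m - i)

lemma invRemainder_succ (hG : d⁄dX ℝ 𝔉 = 𝔉 * d⁄dX ℝ G) {s n : ℕ} (h : s < n) :
    invRemainder s (n + 1) =
      -2 * n * remainder G s n - (2 * s - 1) * coeff s 𝔘 * dfac (n - s) := by
  rw [invRemainder, remainder, coeff_succ_inv_dfacSeries_eq_neg_mul hG (by omega),
    sum_coeff_inv_dfacSeries_sq_mul_dfac h.le]
  ring

lemma natCast_mul_remainder (hG : d⁄dX ℝ 𝔉 = 𝔉 * d⁄dX ℝ G) {r n : ℕ} (hn : 2 * r + 1 ≤ n) :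
    n * remainder G r n =
      ∑ j ∈ range (r + 1), j * dfac j * invRemainder (r - j) (n - j)
        + ∑ k ∈ Icc (r + 1) (n - (r + 1)), coeff k 𝔘 * ((n - k : ℕ) * dfac (n - k)) := by
  have hhead : ∑ k ∈ range (r + 1), coeff k 𝔘 * ((n - k : ℕ) * dfac (n - k))
      - n * ∑ k ∈ range (r + 1), coeff k 𝔘 * dfac (n - k)
      = -∑ k ∈ range (r + 1), k * coeff k 𝔘 * dfac (n - k) := by
    rw [mul_sum, ← sum_sub_distrib, ← sum_neg_distrib]
    refine sum_congr rfl fun k hk => ?_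
    rw [Nat.cast_sub (by have := mem_range.mp hk; omega)]
    ring
  have htail : ∑ j ∈ range (r + 1), coeff (n - j) 𝔘 * ((n - (n - j) : ℕ) * dfac (n - (n - j)))
      = ∑ j ∈ range (r + 1), j * dfac j * coeff (n - j) 𝔘 := by
    refine sum_congr rfl fun j hj => ?_
    rw [show n - (n - j) = j by have := mem_range.mp hj; omega]
    ring
  rw [remainder, mul_sub, natCast_mul_coeff_eq_sum hG,
    sum_range_succ_eq_head_add_middle_add_tail _ hn, add_sub_right_comm, add_sub_right_comm,
    hhead, sum_natCast_mul_coeff_inv_dfacSeries_mul_dfac, htail]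
  simp only [invRemainder, mul_add, sum_add_distrib]
  ring

lemma isBigO_invRemainder (hG : d⁄dX ℝ 𝔉 = 𝔉 * d⁄dX ℝ G) {s : ℕ}
    (h : remainder G s =O[atTop] fun n => dfac (n - (s + 1))) :
    invRemainder s =O[atTop] fun m => dfac (m - (s + 1)) := by
  refine isBigO_of_isBigO_comp_succ ?_
  simp only [Nat.add_sub_add_right]
  have hmul : (fun n : ℕ => (n : ℝ) * remainder G s n) =O[atTop] fun n => dfac (n - s) :=
    ((isBigO_refl _ _).mul h).trans (natCast_mul_dfac_sub_succ_isBigO s)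
  refine ((hmul.const_mul_left (-2)).sub ((isBigO_refl _ _).const_mul_left
    ((2 * s - 1) * coeff s 𝔘))).congr' ?_ EventuallyEq.rfl
  filter_upwards [eventually_gt_atTop s] with n hn
  rw [invRemainder_succ hG hn]
  ring

lemma isBigO_remainder_of_lt (hG : d⁄dX ℝ 𝔉 = 𝔉 * d⁄dX ℝ G) (r : ℕ)
    (ih : ∀ s < r, remainder G s =O[atTop] fun n => dfac (n - (s + 1))) :
    remainder G r =O[atTop] fun n => dfac (n - (r + 1)) := by
  have hhead : (fun n => ∑ j ∈ range (r + 1), j * dfac j * invRemainder (r - j) (n - j))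
      =O[atTop] fun n => dfac (n - (r + 1)) := by
    refine IsBigO.fun_sum fun j hj => ?_
    rcases j with _ | j
    · simpa using isBigO_zero _ _
    have hj : j + 1 ≤ r := by have := mem_range.mp hj; omega
    refine (((isBigO_invRemainder hG (ih _ (by omega))).comp_tendsto
      (tendsto_sub_atTop_nat (j + 1))).const_mul_left _).congr_right fun n => ?_
    simp only [Function.comp_apply]
    congr 1
    omega
  have hdfac : (fun n => dfac (n - (r + 1))) =O[atTop] fun n => (n : ℝ) * dfac (n - (r + 1)) := by
    refine IsBigO.of_bound' ?_
    filter_upwards [eventually_ge_atTop 1] with n hn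
    rw [norm_mul, RCLike.norm_natCast]
    exact le_mul_of_one_le_left (norm_nonneg _) (Nat.one_le_cast.mpr hn)
  refine isBigO_of_natCast_mul_isBigO
    (((hhead.trans hdfac).add
      (sum_Icc_coeff_inv_dfacSeries_mul_isBigO (r + 1))).congr' ?_ EventuallyEq.rfl)
  filter_upwards [eventually_ge_atTop (2 * r + 1)] with n hn
  exact (natCast_mul_remainder hG hn).symm

theorem isBigO_remainder (hG : d⁄dX ℝ 𝔉 = 𝔉 * d⁄dX ℝ G) (r : ℕ) :
    remainder G r =O[atTop] fun n => dfac (n - (r + 1)) := by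
  induction r using Nat.strong_induction_on with
  | _ r ih => exact isBigO_remainder_of_lt hG r ih

end Connected

end ConnectedMaps

theorem combinatorial_map_connected_general
    (ccm im : ℕ → ℝ) (hccm0 : ccm 0 = 0)
    (hccmodd : ∀ m, ¬ 2 ∣ m → ccm m = 0)
    (hexp : (PowerSeries.mk fun m =>
        if 2 ∣ m then (Nat.doubleFactorial (2 * (m / 2) - 1) : ℝ) else 0) =
      expPS (PowerSeries.mk fun m => ccm m / (Nat.factorial m)))
    (him : (PowerSeries.mk fun k => im (2 * k)) =
      1 - (PowerSeries.mk fun n => (Nat.doubleFactorial (2 * n - 1) : ℝ))⁻¹) :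
    ∀ r : ℕ,
      (fun n => ccm (2 * n) /
            ((Nat.factorial (2 * n) : ℝ) * (Nat.doubleFactorial (2 * n - 1) : ℝ)) -
          (1 - ∑ k ∈ Finset.Icc 1 r,
            im (2 * k) * (Nat.doubleFactorial (2 * (n - k) - 1) : ℝ) /
              (Nat.doubleFactorial (2 * n - 1) : ℝ)))
        =O[atTop] fun n =>
          (Nat.doubleFactorial (2 * (n - (r + 1)) - 1) : ℝ) /
            (Nat.doubleFactorial (2 * n - 1) : ℝ) :=
  open PowerSeries ConnectedMaps in by
  intro r
  set G : PowerSeries ℝ := mk fun n => ccm (2 * n) / Nat.factorial (2 * n)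
  have hexpand : expand 2 two_ne_zero dfacSeries = expPS (expand 2 two_ne_zero G) := by
    convert hexp using 2 <;> ext m <;> rw [coeff_expand, coeff_mk]
    · simp [dfacSeries, dfac]
    · split_ifs with h
      · obtain ⟨k, rfl⟩ := h
        simp
      · simp [hccmodd m h]
  have hG := derivative_eq_mul_of_expand_eq_expPS two_ne_zero (by simp [G, hccm0]) hexpand
  refine ((isBigO_remainder hG r).mul (isBigO_refl (fun n => (dfac n)⁻¹) _)).congr
    (fun n => ?_) (fun n => ?_)
  · rw [remainder, sum_range_coeff_inv_dfacSeries_mul_dfac (b := fun k => im (2 * k)) him,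
      coeff_mk, ← sum_div]
    have := dfac_pos n
    simp only [dfac] at this ⊢
    field_simp
  · simp [dfac, div_eq_mul_inv]

/-- asymptotic probability that a random combinatorial map of size `2n`
is connected.  Here `(2n-1)!!` is `Nat.doubleFactorial (2*n - 1)` (so `(-1)!! = 1`). -/
theorem combinatorial_map_connected
    (ccm im : ℕ → ℝ) (hccm0 : ccm 0 = 0)
    (hccmodd : ∀ m, ¬ 2 ∣ m → ccm m = 0) (him0 : im 0 = 0)
    (hexp : (PowerSeries.mk fun m =>
        if 2 ∣ m then (Nat.doubleFactorial (2 * (m / 2) - 1) : ℝ) else 0) =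
      expPS (PowerSeries.mk fun m => ccm m / (Nat.factorial m)))
    (him : (PowerSeries.mk fun k => im (2 * k)) =
      1 - (PowerSeries.mk fun n => (Nat.doubleFactorial (2 * n - 1) : ℝ))⁻¹) :
    ∀ r : ℕ,
      (fun n => ccm (2 * n) /
            ((Nat.factorial (2 * n) : ℝ) * (Nat.doubleFactorial (2 * n - 1) : ℝ)) -
          (1 - ∑ k ∈ Finset.Icc 1 r,
            im (2 * k) * (Nat.doubleFactorial (2 * (n - k) - 1) : ℝ) /
              (Nat.doubleFactorial (2 * n - 1) : ℝ)))
        =O[atTop] fun n =>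
          (Nat.doubleFactorial (2 * (n - (r + 1)) - 1) : ℝ) /
            (Nat.doubleFactorial (2 * n - 1) : ℝ) :=
  combinatorial_map_connected_general ccm im hccm0 hccmodd hexp him
end
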